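/- Let k be a commutative ring, R a commutative k-algebra, and R' a commutative R-algebra (so R' is a k-algebra and the structure maps are compatible). If R' is formally étale over R, then every k-derivation of R extends uniquely to a k-derivation of R': for every k-linear derivation d : R → R there exists a unique k-linear derivation d' : R' → R' such that d'(f(r)) = f(d(r)) for all r ∈ R, where f : R → R' is the structure map. -/

import Mathlib

/-!
A `k`-derivation `R' → M` is the same as an `R'`-linear map `Ω[R'⁄k] → M`. Since `R'` is formally
étale over `R`, `Ω[R'⁄k]` is the base change `R' ⊗[R] Ω[R⁄k]`, so such maps correspond to
`R`-linear maps `Ω[R⁄k] → M`, i.e. to `k`-derivations `R → M`; the correspondence is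
restriction along `R → R'`.
-/

open KaehlerDifferential

section

variable {k R R' M : Type*} [CommRing k] [CommRing R] [CommRing R'] [Algebra k R] [Algebra k R']
  [Algebra R R'] [IsScalarTower k R R'] [AddCommGroup M] [Module R' M] [Module R M] [Module k M]
  [IsScalarTower R R' M] [IsScalarTower k R M] [IsScalarTower k R' M]

theorem Derivation.liftKaehlerDifferential_map (D : Derivation k R' M) (ω : Ω[R⁄k]) :
    D.liftKaehlerDifferential (map k k R R' ω) = (D.compAlgebraMap R).liftKaehlerDifferential ω :=
  LinearMap.congr_fun (f := D.liftKaehlerDifferential.restrictScalars R ∘ₗ map k k R R')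
    (by ext r; simp) ω

theorem Derivation.compAlgebraMap_bijective_of_formallyEtale [Algebra.FormallyEtale R R'] :
    Function.Bijective (Derivation.compAlgebraMap R : Derivation k R' M → Derivation k R M) := by
  have hbc := isBaseChange_of_formallyEtale k R R'
  constructor
  · intro D₁ D₂ h
    have hlift : D₁.liftKaehlerDifferential = D₂.liftKaehlerDifferential :=
      hbc.algHom_ext _ _ fun ω => by
        rw [Derivation.liftKaehlerDifferential_map, Derivation.liftKaehlerDifferential_map, h]
    exact (linearMapEquivDerivation k R').symm.injective hlift
  · intro d
    refine ⟨(hbc.lift d.liftKaehlerDifferential).compDer (D k R'), ?_⟩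
    ext r
    change hbc.lift _ (D k R' (algebraMap R R' r)) = d r
    rw [← map_D k k R R', hbc.lift_eq, Derivation.liftKaehlerDifferential_comp_D]

end

theorem derivation_extends_uniquely_of_formallyEtale.{u}
    (k : Type*) [CommRing k] (R : Type u) [CommRing R] [Algebra k R]
    (R' : Type u) [CommRing R'] [Algebra R R'] [Algebra k R'] [IsScalarTower k R R']
    [Algebra.FormallyEtale R R']
    (d : Derivation k R R) :
    ∃! d' : Derivation k R' R',
      ∀ r : R, d' (algebraMap R R' r) = algebraMap R R' (d r) := by
  have hbij := Derivation.compAlgebraMap_bijective_of_formallyEtale (k := k) (R := R) (R' := R')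
    (M := R')
  obtain ⟨d', hd'⟩ := hbij.surjective ((Algebra.linearMap R R').compDer d)
  exact ⟨d', Derivation.congr_fun hd', fun d'' hd'' => hbij.injective (hd' ▸ Derivation.ext hd'')⟩
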